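/- Let (Ω, F, P) be a probability space, ξ* ∈ L² with ξ* ≥ 0 a.s., and q ∈ L², λ₁, λ₂ ∈ ℝ. If E[(2ξ* + λ₁q + λ₂)(ξ − ξ*)] ≥ 0 for every ξ ∈ L² with ξ ≥ 0 a.s., then 2ξ* + λ₁q + λ₂ ≥ 0 a.s. on {ξ* = 0} and 2ξ* + λ₁q + λ₂ = 0 a.s. on {ξ* > 0}. -/

import Mathlib

/-!
Write `g = 2ξ* + λ₁q + λ₂` for the gradient. Testing the variational inequality with
`ξ = ξ* + 1_s` gives `∫_s g ≥ 0` for every measurable `s`, hence `g ≥ 0` a.e.; testing it with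
`ξ = 0` gives `∫ g ξ* ≤ 0`, and since `g ξ* ≥ 0` a.e. this forces `g ξ* = 0` a.e., so `g = 0`
a.e. where `ξ* > 0`.
-/

open MeasureTheory ENNReal

section

variable {Ω : Type*} [MeasurableSpace Ω] {μ : Measure Ω} {p : ℝ≥0∞} {g x : Ω → ℝ}

theorem ae_nonneg_of_variational_inequality [IsFiniteMeasure μ] (hg : Integrable g μ)
    (hx : MemLp x p μ) (hx_nonneg : 0 ≤ᵐ[μ] x)
    (hvar : ∀ ξ : Ω → ℝ, MemLp ξ p μ → 0 ≤ᵐ[μ] ξ → 0 ≤ ∫ ω, g ω * (ξ ω - x ω) ∂μ) :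
    0 ≤ᵐ[μ] g := by
  refine ae_nonneg_of_forall_setIntegral_nonneg hg fun s hs _ => ?_
  have hmem : MemLp (x + s.indicator 1) p μ :=
    hx.add (memLp_indicator_const p hs 1 (Or.inr (measure_ne_top μ s)))
  have hpos : 0 ≤ᵐ[μ] x + s.indicator 1 := by
    filter_upwards [hx_nonneg] with ω hω
    exact add_nonneg hω (Set.indicator_nonneg (fun _ _ => zero_le_one) ω)
  calc 0 ≤ ∫ ω, g ω * ((x + s.indicator 1 : Ω → ℝ) ω - x ω) ∂μ := hvar _ hmem hpos
    _ = ∫ ω, s.indicator g ω ∂μ := by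
        congr 1 with ω
        rw [Pi.add_apply, add_sub_cancel_left, ← Set.indicator_mul_right]
        simp only [Pi.one_apply, mul_one]
    _ = ∫ ω in s, g ω ∂μ := integral_indicator hs

theorem mul_ae_eq_zero_of_variational_inequality (hgx : Integrable (g * x) μ)
    (hg_nonneg : 0 ≤ᵐ[μ] g) (hx_nonneg : 0 ≤ᵐ[μ] x)
    (hvar : ∀ ξ : Ω → ℝ, MemLp ξ p μ → 0 ≤ᵐ[μ] ξ → 0 ≤ ∫ ω, g ω * (ξ ω - x ω) ∂μ) :
    g * x =ᵐ[μ] 0 := by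
  have hgx_nonneg : 0 ≤ᵐ[μ] g * x := by
    filter_upwards [hg_nonneg, hx_nonneg] with ω h₁ h₂ using mul_nonneg h₁ h₂
  have hle : ∫ ω, (g * x) ω ∂μ ≤ 0 := by
    simpa [integral_neg] using hvar 0 MemLp.zero Filter.EventuallyLE.rfl
  exact (integral_eq_zero_iff_of_nonneg_ae hgx_nonneg hgx).mp
    (le_antisymm hle (integral_nonneg_of_ae hgx_nonneg))

end

/-- Converse: if `E[(2ξ* + lam₁q + lam₂)(ξ − ξ*)] ≥ 0` for every nonnegative `ξ ∈ L²`, then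
`2ξ* + lam₁q + lam₂ ≥ 0` a.s. on `{ξ* = 0}` and `= 0` a.s. on `{ξ* > 0}`. -/
theorem pointwise_conditions_of_variational_inequality
    {Ω : Type*} [MeasurableSpace Ω] (μ : Measure Ω) [IsProbabilityMeasure μ]
    (ξstar q : Ω → ℝ) (lam₁ lam₂ : ℝ)
    (hξstar : MemLp ξstar 2 μ) (hq : MemLp q 2 μ)
    (hξstar_nonneg : ∀ᵐ ω ∂μ, 0 ≤ ξstar ω)
    (hvar : ∀ ξ : Ω → ℝ, MemLp ξ 2 μ → (∀ᵐ ω ∂μ, 0 ≤ ξ ω) →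
      0 ≤ ∫ ω, (2 * ξstar ω + lam₁ * q ω + lam₂) * (ξ ω - ξstar ω) ∂μ) :
    (∀ᵐ ω ∂μ, ξstar ω = 0 → 0 ≤ 2 * ξstar ω + lam₁ * q ω + lam₂) ∧
    (∀ᵐ ω ∂μ, 0 < ξstar ω → 2 * ξstar ω + lam₁ * q ω + lam₂ = 0) := by
  set g : Ω → ℝ := fun ω => 2 * ξstar ω + lam₁ * q ω + lam₂
  have hg : MemLp g 2 μ :=
    ((hξstar.const_mul 2).add (hq.const_mul lam₁)).add (memLp_const lam₂)
  have hg_nonneg : 0 ≤ᵐ[μ] g :=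
    ae_nonneg_of_variational_inequality (hg.integrable one_le_two) hξstar hξstar_nonneg hvar
  have hgξ : g * ξstar =ᵐ[μ] 0 :=
    mul_ae_eq_zero_of_variational_inequality (hg.integrable_mul hξstar) hg_nonneg
      hξstar_nonneg hvar
  refine ⟨hg_nonneg.mono fun ω h _ => h, hgξ.mono fun ω h hpos => ?_⟩
  exact (mul_eq_zero.mp h).resolve_right hpos.ne'
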